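/- The reverse of the relation →₀ ∪ →ℐ on formulas is well-founded; in particular, there is no infinite sequence F₀, F₁, F₂, … of formulas in which each step Fᵢ to Fᵢ₊₁ is either a vacuous-quantifier rewrite step or an innermost rewrite step. -/

import Mathlib

mutual
  /-- Terms of first-order logic extended with Hilbert's ε-operator,
  in de Bruijn representation (so formulas are automatically identified up
  to renaming of bound variables). -/
  inductive Tm : Type
    | var : ℕ → Tm
    | fn : ℕ → (k : ℕ) → (Fin k → Tm) → Tm
    | eps : Fm → Tm
  /-- Formulas; `ex F`, `all F` and `Tm.eps F` bind de Bruijn index 0 of `F`. -/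
  inductive Fm : Type
    | pred : ℕ → (k : ℕ) → (Fin k → Tm) → Fm
    | not : Fm → Fm
    | or : Fm → Fm → Fm
    | and : Fm → Fm → Fm
    | imp : Fm → Fm → Fm
    | ex : Fm → Fm
    | all : Fm → Fm
end

/-- Lifting a renaming under a binder. -/
def upRen (r : ℕ → ℕ) : ℕ → ℕ
  | 0 => 0
  | n + 1 => r n + 1

mutual
  /-- Renaming of free variables in a term. -/
  def renT (r : ℕ → ℕ) : Tm → Tm
    | .var i => .var (r i)
    | .fn f k a => .fn f k (fun i => renT r (a i))
    | .eps F => .eps (renF (upRen r) F)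
  /-- Renaming of free variables in a formula. -/
  def renF (r : ℕ → ℕ) : Fm → Fm
    | .pred p k a => .pred p k (fun i => renT r (a i))
    | .not F => .not (renF r F)
    | .or F G => .or (renF r F) (renF r G)
    | .and F G => .and (renF r F) (renF r G)
    | .imp F G => .imp (renF r F) (renF r G)
    | .ex F => .ex (renF (upRen r) F)
    | .all F => .all (renF (upRen r) F)
end

/-- Lifting a substitution under a binder. -/
def upSub (σ : ℕ → Tm) : ℕ → Tm
  | 0 => .var 0
  | n + 1 => renT Nat.succ (σ n)

mutual
  /-- Capture-avoiding simultaneous substitution on terms. -/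
  def subT (σ : ℕ → Tm) : Tm → Tm
    | .var i => σ i
    | .fn f k a => .fn f k (fun i => subT σ (a i))
    | .eps F => .eps (subF (upSub σ) F)
  /-- Capture-avoiding simultaneous substitution on formulas. -/
  def subF (σ : ℕ → Tm) : Fm → Fm
    | .pred p k a => .pred p k (fun i => subT σ (a i))
    | .not F => .not (subF σ F)
    | .or F G => .or (subF σ F) (subF σ G)
    | .and F G => .and (subF σ F) (subF σ G)
    | .imp F G => .imp (subF σ F) (subF σ G)
    | .ex F => .ex (subF (upSub σ) F)
    | .all F => .all (subF (upSub σ) F)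
end

/-- `inst1 F t` is `F{x ↦ t}` for the variable `x` bound just outside `F`
(de Bruijn index 0). -/
def inst1 (F : Fm) (t : Tm) : Fm :=
  subF (fun n => match n with | 0 => t | n + 1 => .var n) F

mutual
  /-- The variable with de Bruijn index `n` occurs free in the term. -/
  def freeT (n : ℕ) : Tm → Prop
    | .var i => i = n
    | .fn _ _ a => ∃ i, freeT n (a i)
    | .eps F => freeF (n + 1) F
  /-- The variable with de Bruijn index `n` occurs free in the formula. -/
  def freeF (n : ℕ) : Fm → Prop
    | .pred _ _ a => ∃ i, freeT n (a i)
    | .not F => freeF n F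
    | .or F G => freeF n F ∨ freeF n G
    | .and F G => freeF n F ∨ freeF n G
    | .imp F G => freeF n F ∨ freeF n G
    | .ex F => freeF (n + 1) F
    | .all F => freeF (n + 1) F
end

mutual
  /-- Number of occurrences of quantifiers (∃ and ∀, but not ε) in a term. -/
  def qcT : Tm → ℕ
    | .var _ => 0
    | .fn _ _ a => ∑ i, qcT (a i)
    | .eps F => qcF F
  /-- Number of occurrences of quantifiers (∃ and ∀, but not ε) in a formula. -/
  def qcF : Fm → ℕ
    | .pred _ _ a => ∑ i, qcT (a i)
    | .not F => qcF F
    | .or F G => qcF F + qcF G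
    | .and F G => qcF F + qcF G
    | .imp F G => qcF F + qcF G
    | .ex F => qcF F + 1
    | .all F => qcF F + 1
end

/-- Quantifier symbols. -/
inductive Quant : Type
  | ex
  | all

/-- `mkQ Q A` is the quantified formula `Qx. A`. -/
def mkQ : Quant → Fm → Fm
  | .ex, A => .ex A
  | .all, A => .all A

/-- `negQ Q A` is `¬^Q A`: `¬A` for `Q = ∀` and `A` for `Q = ∃`. -/
def negQ : Quant → Fm → Fm
  | .ex, A => A
  | .all, A => .not A

/-- `qeRedex Q A` is `A{x ↦ εx. ¬^Q A}`, the contractum of the redex `Qx. A`. -/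
def qeRedex (Q : Quant) (A : Fm) : Fm := inst1 A (.eps (negQ Q A))

mutual
  /-- One rewrite step inside a term, where each rewritten quantified subformula
  `Qx. A` is required to satisfy the side condition `P A`. -/
  inductive StepT (P : Fm → Prop) : Tm → Tm → Prop
    | fn {f k} {a : Fin k → Tm} {j : Fin k} {t' : Tm} :
        StepT P (a j) t' → StepT P (.fn f k a) (.fn f k (Function.update a j t'))
    | eps {F F'} : StepF P F F' → StepT P (.eps F) (.eps F')
  /-- One rewrite step on formulas: replace one occurrence of a subformula
  `Qx. A` (with `P A`) by `A{x ↦ εx. ¬^Q A}`. -/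
  inductive StepF (P : Fm → Prop) : Fm → Fm → Prop
    | root {Q A} : P A → StepF P (mkQ Q A) (qeRedex Q A)
    | pred {p k} {a : Fin k → Tm} {j : Fin k} {t' : Tm} :
        StepT P (a j) t' → StepF P (.pred p k a) (.pred p k (Function.update a j t'))
    | not {F F'} : StepF P F F' → StepF P (.not F) (.not F')
    | orL {F F' G} : StepF P F F' → StepF P (.or F G) (.or F' G)
    | orR {F G G'} : StepF P G G' → StepF P (.or F G) (.or F G')
    | andL {F F' G} : StepF P F F' → StepF P (.and F G) (.and F' G)
    | andR {F G G'} : StepF P G G' → StepF P (.and F G) (.and F G')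
    | impL {F F' G} : StepF P F F' → StepF P (.imp F G) (.imp F' G)
    | impR {F G G'} : StepF P G G' → StepF P (.imp F G) (.imp F G')
    | ex {F F'} : StepF P F F' → StepF P (.ex F) (.ex F')
    | all {F F'} : StepF P F F' → StepF P (.all F) (.all F')
end

/-- The quantifier-elimination rewrite relation `→` on formulas. -/
def Step : Fm → Fm → Prop := StepF (fun _ => True)

/-- `→₀`: the steps rewriting a vacuous quantifier (bound variable not free in the body). -/
def Step0 : Fm → Fm → Prop := StepF (fun A => ¬ freeF 0 A)

/-- `→₁`: the steps rewriting a non-vacuous quantifier. -/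
def Step1 : Fm → Fm → Prop := StepF (fun A => freeF 0 A)

/-- `→ℐ`: the innermost steps, whose rewritten subformula `Qx. A` contains no
quantifier other than the outermost `Q`. -/
def StepI : Fm → Fm → Prop := StepF (fun A => qcF A = 0)

/-! A step `Qx. A → A{x ↦ εx. ¬^Q A}` deletes the quantifier `Q` and copies the ε-term into
the free occurrences of `x`. If `x` does not occur free in `A` nothing is copied, and if `A` is
quantifier-free so is the ε-term; either way the step removes exactly one quantifier, so the number
of quantifiers strictly decreases along `→₀ ∪ →ℐ`. -/

mutual
theorem qcT_renT (r : ℕ → ℕ) : ∀ t, qcT (renT r t) = qcT t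
  | .var _ => rfl
  | .fn _ _ a => by
      simp only [renT, qcT]
      exact Finset.sum_congr rfl fun i _ => qcT_renT r (a i)
  | .eps F => qcF_renF (upRen r) F
theorem qcF_renF (r : ℕ → ℕ) : ∀ F, qcF (renF r F) = qcF F
  | .pred _ _ a => by
      simp only [renF, qcF]
      exact Finset.sum_congr rfl fun i _ => qcT_renT r (a i)
  | .not F => qcF_renF r F
  | .or F G | .and F G | .imp F G => by simp only [renF, qcF, qcF_renF r F, qcF_renF r G]
  | .ex F | .all F => by simp only [renF, qcF, qcF_renF (upRen r) F]
end

theorem qcT_upSub {σ : ℕ → Tm} {F : Fm} (h : ∀ n, freeF (n + 1) F → qcT (σ n) = 0) :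
    ∀ n, freeF n F → qcT (upSub σ n) = 0
  | 0, _ => rfl
  | m + 1, hm => (qcT_renT Nat.succ (σ m)).trans (h m hm)

mutual
theorem qcT_subT (σ : ℕ → Tm) :
    ∀ t, (∀ n, freeT n t → qcT (σ n) = 0) → qcT (subT σ t) = qcT t
  | .var i, h => h i rfl
  | .fn _ _ a, h => by
      simp only [subT, qcT]
      exact Finset.sum_congr rfl fun i _ => qcT_subT σ (a i) fun n hn => h n ⟨i, hn⟩
  | .eps F, h => qcF_subF (upSub σ) F (qcT_upSub h)
theorem qcF_subF (σ : ℕ → Tm) :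
    ∀ F, (∀ n, freeF n F → qcT (σ n) = 0) → qcF (subF σ F) = qcF F
  | .pred _ _ a, h => by
      simp only [subF, qcF]
      exact Finset.sum_congr rfl fun i _ => qcT_subT σ (a i) fun n hn => h n ⟨i, hn⟩
  | .not F, h => qcF_subF σ F h
  | .or F G, h | .and F G, h | .imp F G, h => by
      simp only [subF, qcF, qcF_subF σ F fun n hn => h n (Or.inl hn),
        qcF_subF σ G fun n hn => h n (Or.inr hn)]
  | .ex F, h | .all F, h => by
      simp only [subF, qcF, qcF_subF (upSub σ) F (qcT_upSub h)]
end

theorem qcF_inst1 {F : Fm} {t : Tm} (ht : freeF 0 F → qcT t = 0) : qcF (inst1 F t) = qcF F :=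
  qcF_subF _ F fun
    | 0, h0 => ht h0
    | _ + 1, _ => rfl

theorem qcF_negQ (Q : Quant) (A : Fm) : qcF (negQ Q A) = qcF A := by
  cases Q <;> rfl

theorem qcF_mkQ (Q : Quant) (A : Fm) : qcF (mkQ Q A) = qcF A + 1 := by
  cases Q <;> rfl

theorem qcF_qeRedex {Q : Quant} {A : Fm} (hA : freeF 0 A → qcF A = 0) :
    qcF (qeRedex Q A) = qcF A :=
  qcF_inst1 fun h0 => (qcF_negQ Q A).trans (hA h0)

theorem Fintype.sum_apply_update_lt {ι α M : Type*} [Fintype ι] [DecidableEq ι]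
    [AddCommMonoid M] [PartialOrder M] [IsOrderedCancelAddMonoid M] (g : α → M)
    (a : ι → α) {j : ι} {x : α} (hx : g x < g (a j)) :
    ∑ i, g (Function.update a j x i) < ∑ i, g (a i) := by
  refine Finset.sum_lt_sum (fun i _ => ?_) ⟨j, Finset.mem_univ j, by simpa using hx⟩
  rcases eq_or_ne i j with rfl | hij
  · simpa using hx.le
  · simp [hij]

theorem qcF_lt_of_stepF {P : Fm → Prop} (hP : ∀ A, P A → freeF 0 A → qcF A = 0) {F F' : Fm}
    (h : StepF P F F') : qcF F' < qcF F := by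
  induction h using StepF.rec (motive_1 := fun t t' _ => qcT t' < qcT t) with
  | root hA => rw [qcF_mkQ, qcF_qeRedex (hP _ hA)]; exact Nat.lt_succ_self _
  | fn _ ih | pred _ ih => exact Fintype.sum_apply_update_lt qcT _ ih
  | _ => simp only [qcT, qcF] at *; omega

theorem qcF_lt_of_step0_or_stepI {F G : Fm} (h : Step0 F G ∨ StepI F G) : qcF G < qcF F :=
  h.elim (qcF_lt_of_stepF fun _ hA h0 => absurd h0 hA) (qcF_lt_of_stepF fun _ hA _ => hA)

/-- the reverse of `→₀ ∪ →ℐ` is well-founded; in particular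
there is no infinite sequence of `→₀`- or `→ℐ`-steps. -/
theorem stmt10 :
    WellFounded (fun G F : Fm => Step0 F G ∨ StepI F G) ∧
    ¬ ∃ f : ℕ → Fm, ∀ i : ℕ, Step0 (f i) (f (i + 1)) ∨ StepI (f i) (f (i + 1)) := by
  have wf : WellFounded (fun G F : Fm => Step0 F G ∨ StepI F G) :=
    Subrelation.wf qcF_lt_of_step0_or_stepI (InvImage.wf qcF wellFounded_lt)
  exact ⟨wf, fun ⟨f, hf⟩ => (wellFounded_iff_isEmpty_descending_chain.1 wf).elim ⟨f, hf⟩⟩
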